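/- Let G be an m×n matrix over F₂ with columns v₁,…,vₙ, and let V ⊆ F₂ⁿ be the span of the rows of G. Suppose K ≥ 1 is an integer such that for every index i with vᵢ ≠ 0 there exist at least K pairwise disjoint two-element sets {j,l} ⊆ {1,…,n}∖{i} with vᵢ = vⱼ + vₗ. Then dim V ≤ log₂( Σ_{i=0}^{⌊n/(K+1)⌋} C(n,i) ) ≤ (n·log₂(K+1) + n/ln 2)/(K+1), where C(n,i) denotes the binomial coefficient. -/

import Mathlib

/-!
Row rank equals column rank, so `2 ^ dim V` is the number of column sums `∑ i ∈ T, v i`.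
Each such sum is attained by a set `S` of minimum size, and minimality means that every
zero-sum set `T` meets `S` in at most half of its elements. For `i ∈ S` the `K` pairs `{j, l}`
with `v i = v j + v l` then lie outside `S`; regard them as edges labelled `i` (the pairs
`(i, p)` of `S.sigma Q`). Minimality also forces the edges other than `{j, l}` at `j` and at `l`
to carry one common label, so every edge has an endpoint of degree one or two endpoints of
degree two. Hence each edge contributes at least `1` to `∑ 1 / deg` over its endpoints, and this
double count gives `K * #S ≤ n - #S`. So `2 ^ dim V ≤ ∑_{i ≤ n/(K+1)} C(n, i)`, and the last
bound follows from `∑_{i ≤ R} C(n, i) * x ^ R ≤ (1 + x) ^ n` at `x = 1 / (K + 1)`.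
-/

/-- The dual of a set of vectors in `F₂ⁿ`: all vectors orthogonal to every element. -/
def dualSet {n : ℕ} (V : Set (Fin n → ZMod 2)) : Set (Fin n → ZMod 2) :=
  {y | ∀ x ∈ V, ∑ i, x i * y i = 0}

open Finset Real

theorem Finset.card_symmDiff_add_two_mul_card_inter {ι : Type*} [DecidableEq ι] (S T : Finset ι) :
    #(symmDiff S T) + 2 * #(S ∩ T) = #S + #T := by
  rw [← card_union_add_card_inter, symmDiff_eq_sup_sdiff_inf, two_mul, ← add_assoc]
  congr 1
  exact card_sdiff_add_card_eq_card inter_subset_union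

theorem Finset.card_le_card_of_one_le_sum_inv_degree {α β : Type*} [DecidableEq β] {E : Finset α}
    {f : α → Finset β} {U : Finset β} (hU : ∀ e ∈ E, f e ⊆ U)
    (h : ∀ e ∈ E, 1 ≤ ∑ y ∈ f e, (#{e' ∈ E | y ∈ f e'} : ℚ)⁻¹) : #E ≤ #U := by
  have : (#E : ℚ) ≤ #U := calc
    (#E : ℚ) = ∑ e ∈ E, 1 := by simp
    _ ≤ ∑ e ∈ E, ∑ y ∈ f e, (#{e' ∈ E | y ∈ f e'} : ℚ)⁻¹ := sum_le_sum h
    _ = ∑ y ∈ U, ∑ e ∈ E with y ∈ f e, (#{e' ∈ E | y ∈ f e'} : ℚ)⁻¹ :=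
        sum_comm' fun e y => by
          simp only [mem_filter]
          exact ⟨fun h => ⟨h, hU e h.1 h.2⟩, fun h => h.1⟩
    _ = ∑ y ∈ U, (#{e' ∈ E | y ∈ f e'} : ℚ) * (#{e' ∈ E | y ∈ f e'} : ℚ)⁻¹ := by
        simp only [sum_const, nsmul_eq_mul]
    _ ≤ ∑ y ∈ U, 1 := sum_le_sum fun _ _ => mul_inv_le_one
    _ = #U := by simp
  exact_mod_cast this

theorem one_le_inv_add_inv {a b : ℕ} (ha : 1 ≤ a) (hb : 1 ≤ b) (hab : 2 ≤ b → a ≤ 2)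
    (hba : 2 ≤ a → b ≤ 2) : (1 : ℚ) ≤ (a : ℚ)⁻¹ + (b : ℚ)⁻¹ := by
  obtain rfl | ha := ha.eq_or_lt
  · simp only [Nat.cast_one, inv_one, le_add_iff_nonneg_right]; positivity
  obtain rfl | hb := hb.eq_or_lt
  · simp only [Nat.cast_one, inv_one, le_add_iff_nonneg_left]; positivity
  obtain rfl : a = 2 := by omega
  obtain rfl : b = 2 := by omega
  norm_num

section SumPairs

variable {ι M : Type*} [AddCommGroup M]

/-- Reading finsets as vectors of `F₂^ι` and `∑ i ∈ T, v i` as the syndrome of `T`, this says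
that `S` has minimum weight in its coset of the code `{T | ∑ i ∈ T, v i = 0}`. -/
def IsCosetLeader (v : ι → M) (S : Finset ι) : Prop :=
  ∀ T : Finset ι, ∑ i ∈ T, v i = ∑ i ∈ S, v i → #S ≤ #T

def IsDisjointSumPairs [DecidableEq ι] (v : ι → M) (i : ι) (P : Finset (Finset ι)) : Prop :=
  (P : Set (Finset ι)).PairwiseDisjoint id ∧
    ∀ s ∈ P, ∃ j l : ι, j ≠ l ∧ s = {j, l} ∧ i ∉ s ∧ v i = v j + v l

theorem exists_isCosetLeader (v : ι → M) (T : Finset ι) :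
    ∃ S, IsCosetLeader v S ∧ ∑ i ∈ S, v i = ∑ i ∈ T, v i := by
  obtain ⟨S, hS, hmin⟩ :=
    (measure (#· : Finset ι → ℕ)).wf.has_min {S | ∑ i ∈ S, v i = ∑ i ∈ T, v i} ⟨T, rfl⟩
  exact ⟨S, fun T' hT' => not_lt.mp (hmin T' (hT'.trans hS)), hS⟩

section DisjointPairs

variable [DecidableEq ι] {v : ι → M}

theorem IsDisjointSumPairs.eq_of_mem_of_mem {i y : ι} {P : Finset (Finset ι)} {p q : Finset ι}
    (hP : IsDisjointSumPairs v i P) (hp : p ∈ P) (hq : q ∈ P) (hyp : y ∈ p) (hyq : y ∈ q) :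
    p = q := by
  by_contra hne
  exact disjoint_left.mp (hP.1 hp hq hne) hyp hyq

theorem eq_of_mem_sigma_of_fst_eq {S : Finset ι} {Q : ι → Finset (Finset ι)}
    (hQ : ∀ i ∈ S, IsDisjointSumPairs v i (Q i)) {e e' : Σ _ : ι, Finset ι} (he : e ∈ S.sigma Q)
    (he' : e' ∈ S.sigma Q) (h : e.1 = e'.1) {y : ι} (hy : y ∈ e.2) (hy' : y ∈ e'.2) : e = e' := by
  rw [mem_sigma] at he he'
  obtain ⟨i, p⟩ := e
  obtain ⟨i', p'⟩ := e'
  obtain rfl : i = i' := h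
  obtain rfl : p = p' := (hQ i he.1).eq_of_mem_of_mem he.2 he'.2 hy hy'
  rfl

end DisjointPairs

variable [Module (ZMod 2) M] {v : ι → M}

theorem exists_sum_eq_of_mem_span [Fintype ι] {x : M}
    (hx : x ∈ Submodule.span (ZMod 2) (Set.range v)) : ∃ T : Finset ι, ∑ i ∈ T, v i = x := by
  obtain ⟨c, rfl⟩ := (Submodule.mem_span_range_iff_exists_fun _).mp hx
  refine ⟨({i | c i ≠ 0} : Finset ι), ?_⟩
  rw [sum_filter]
  refine sum_congr rfl fun i _ => ?_
  rcases (by decide : ∀ a : ZMod 2, a = 0 ∨ a = 1) (c i) with h | h <;> simp [h]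

theorem two_pow_finrank_span_le [Fintype ι] {R : ℕ}
    (h : ∀ T : Finset ι, ∃ S : Finset ι, ∑ i ∈ S, v i = ∑ i ∈ T, v i ∧ #S ≤ R) :
    2 ^ Module.finrank (ZMod 2) (Submodule.span (ZMod 2) (Set.range v)) ≤
      ∑ k ∈ range (R + 1), (Fintype.card ι).choose k := by
  classical
  have := FiniteDimensional.span_of_finite (ZMod 2) (Set.finite_range v)
  set B := (range (R + 1)).biUnion fun k => powersetCard k (univ : Finset ι)
  have hsub : (Submodule.span (ZMod 2) (Set.range v) : Set M) ⊆
      B.image fun S => ∑ i ∈ S, v i := by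
    intro x hx
    obtain ⟨T, rfl⟩ := exists_sum_eq_of_mem_span hx
    obtain ⟨S, hS, hcard⟩ := h T
    exact mem_image.mpr ⟨S, mem_biUnion.mpr
      ⟨#S, mem_range.mpr (by omega), mem_powersetCard_univ.mpr rfl⟩, hS⟩
  calc 2 ^ Module.finrank (ZMod 2) (Submodule.span (ZMod 2) (Set.range v))
      = Nat.card (Submodule.span (ZMod 2) (Set.range v)) := by
        rw [Module.natCard_eq_pow_finrank (K := ZMod 2), Nat.card_zmod]
    _ = (Submodule.span (ZMod 2) (Set.range v) : Set M).ncard := Nat.card_coe_set_eq _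
    _ ≤ #(B.image fun S => ∑ i ∈ S, v i) :=
        (Set.ncard_le_ncard hsub (finite_toSet _)).trans_eq (Set.ncard_coe_finset _)
    _ ≤ #B := card_image_le
    _ ≤ ∑ k ∈ range (R + 1), #(powersetCard k (univ : Finset ι)) := card_biUnion_le
    _ = _ := by simp only [card_powersetCard, card_univ]

variable [DecidableEq ι]

theorem ZModModule.sum_symmDiff (v : ι → M) (S T : Finset ι) :
    ∑ i ∈ symmDiff S T, v i = ∑ i ∈ S, v i + ∑ i ∈ T, v i := by
  rw [← sum_union_inter, symmDiff_eq_sup_sdiff_inf, ← sum_sdiff (inter_subset_union (s := S)),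
    add_assoc, ZModModule.add_self, add_zero]
  rfl

namespace IsCosetLeader

variable {S : Finset ι}

theorem two_mul_card_le (hS : IsCosetLeader v S) {T O : Finset ι} (hT : ∑ i ∈ T, v i = 0)
    (hO : O ⊆ S ∩ T) : 2 * #O ≤ #T := by
  have hle := hS (symmDiff S T) (by rw [ZModModule.sum_symmDiff, hT, add_zero])
  have := card_symmDiff_add_two_mul_card_inter S T
  have := card_le_card hO
  omega

theorem ne_zero (hS : IsCosetLeader v S) {i : ι} (hi : i ∈ S) : v i ≠ 0 := by
  intro h0
  have := hS.two_mul_card_le (T := {i}) (O := {i}) (by simpa using h0) (by simpa using hi)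
  simp at this

theorem notMem_of_eq_add (hS : IsCosetLeader v S) {i j l : ι} (hi : i ∈ S) (hij : i ≠ j)
    (hil : i ≠ l) (hjl : j ≠ l) (h : v i = v j + v l) : j ∉ S := by
  intro hj
  have hT : ∑ x ∈ {i, j, l}, v x = 0 := by
    rw [sum_insert (by simp [hij, hil]), sum_pair hjl, ← h, ZModModule.add_self]
  have := hS.two_mul_card_le hT (O := {i, j}) (by grind)
  rw [card_pair hij] at this
  have := card_le_three (a := i) (b := j) (c := l)
  omega

theorem eq_of_eq_add (hS : IsCosetLeader v S) {i i' i'' j l a b : ι} (hi : i ∈ S)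
    (hi' : i' ∈ S) (hi'' : i'' ∈ S) (hii' : i' ≠ i) (hii'' : i'' ≠ i) (ha : a ∉ S) (hb : b ∉ S)
    (h : v i = v j + v l) (h' : v i' = v j + v a) (h'' : v i'' = v l + v b) : i' = i'' := by
  by_contra hne
  have hdisj : Disjoint (symmDiff {a} {b} : Finset ι) {i, i', i''} := by
    refine disjoint_left.mpr fun x hx hx' => ?_
    have hxab : x ∈ ({a} ∪ {b} : Finset ι) := (symmDiff_le_sup (α := Finset ι)) hx
    grind
  -- `{a} ∆ {b}` has sum `v a + v b` also when `a = b`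
  have hT : ∑ x ∈ symmDiff {a} {b} ∪ {i, i', i''}, v x = 0 := by
    rw [sum_union hdisj, ZModModule.sum_symmDiff, sum_insert (by grind), sum_pair hne, h, h', h'',
      sum_singleton, sum_singleton]
    rw [show v a + v b + (v j + v l + (v j + v a + (v l + v b))) =
      (v a + v a) + (v b + v b) + (v j + v j) + (v l + v l) by abel]
    simp only [ZModModule.add_self]
  have hcard := hS.two_mul_card_le hT (O := {i, i', i''}) (by grind)
  have h3 : #{i, i', i''} = 3 := by grind
  have h2 : #(symmDiff {a} {b} : Finset ι) ≤ 2 :=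
    (card_le_card symmDiff_le_sup).trans (card_union_le _ _)
  have := card_union_le (symmDiff {a} {b}) {i, i', i''}
  omega

theorem notMem_of_isDisjointSumPairs (hS : IsCosetLeader v S) {i y : ι} {P : Finset (Finset ι)}
    {p : Finset ι} (hi : i ∈ S) (hP : IsDisjointSumPairs v i P) (hp : p ∈ P) (hy : y ∈ p) :
    y ∉ S := by
  obtain ⟨j, l, hjl, rfl, hip, h⟩ := hP.2 p hp
  rw [mem_insert, mem_singleton] at hy
  rcases hy with rfl | rfl
  · exact hS.notMem_of_eq_add hi (by grind) (by grind) hjl h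
  · exact hS.notMem_of_eq_add hi (by grind) (by grind) hjl.symm (h.trans (add_comm _ _))

theorem exists_notMem_eq_add (hS : IsCosetLeader v S) {i y : ι} {P : Finset (Finset ι)}
    {p : Finset ι} (hi : i ∈ S) (hP : IsDisjointSumPairs v i P) (hp : p ∈ P) (hy : y ∈ p) :
    ∃ a ∉ S, v i = v y + v a := by
  obtain ⟨j, l, -, rfl, -, h⟩ := hP.2 p hp
  rw [mem_insert, mem_singleton] at hy
  rcases hy with rfl | rfl
  · exact ⟨l, hS.notMem_of_isDisjointSumPairs hi hP hp (by simp), h⟩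
  · exact ⟨j, hS.notMem_of_isDisjointSumPairs hi hP hp (by simp), h.trans (add_comm _ _)⟩

variable {Q : ι → Finset (Finset ι)} {e : Σ _ : ι, Finset ι} {j l : ι}

theorem fst_eq_of_mem_of_mem (hS : IsCosetLeader v S) (hQ : ∀ i ∈ S, IsDisjointSumPairs v i (Q i))
    (he : e ∈ S.sigma Q) (hj : j ∈ e.2) (hl : l ∈ e.2) (h : v e.1 = v j + v l)
    {e' f : Σ _ : ι, Finset ι} (he' : e' ∈ S.sigma Q) (hf : f ∈ S.sigma Q) (hj' : j ∈ e'.2)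
    (hl' : l ∈ f.2) (he'e : e' ≠ e) (hfe : f ≠ e) : e'.1 = f.1 := by
  have hne' : e'.1 ≠ e.1 := fun h1 => he'e (eq_of_mem_sigma_of_fst_eq hQ he' he h1 hj' hj)
  have hne'' : f.1 ≠ e.1 := fun h1 => hfe (eq_of_mem_sigma_of_fst_eq hQ hf he h1 hl' hl)
  rw [mem_sigma] at he he' hf
  obtain ⟨a, ha, h'⟩ := hS.exists_notMem_eq_add he'.1 (hQ _ he'.1) he'.2 hj'
  obtain ⟨b, hb, h''⟩ := hS.exists_notMem_eq_add hf.1 (hQ _ hf.1) hf.2 hl'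
  exact hS.eq_of_eq_add he.1 he'.1 hf.1 hne' hne'' ha hb h h' h''

theorem card_filter_mem_le_two (hS : IsCosetLeader v S)
    (hQ : ∀ i ∈ S, IsDisjointSumPairs v i (Q i)) (he : e ∈ S.sigma Q) (hj : j ∈ e.2)
    (hl : l ∈ e.2) (h : v e.1 = v j + v l) (h2 : 2 ≤ #{f ∈ S.sigma Q | l ∈ f.2}) :
    #{f ∈ S.sigma Q | j ∈ f.2} ≤ 2 := by
  obtain ⟨f, hf⟩ : ({f ∈ S.sigma Q | l ∈ f.2}.erase e).Nonempty := by
    rw [← card_pos, card_erase_of_mem (by simp [he, hl])]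
    omega
  simp only [mem_erase, mem_filter] at hf
  have hle : #({f ∈ S.sigma Q | j ∈ f.2}.erase e) ≤ 1 := by
    refine card_le_one.mpr fun e' he' e'' he'' => ?_
    simp only [mem_erase, mem_filter] at he' he''
    refine eq_of_mem_sigma_of_fst_eq hQ he'.2.1 he''.2.1 ?_ he'.2.2 he''.2.2
    exact (hS.fst_eq_of_mem_of_mem hQ he hj hl h he'.2.1 hf.2.1 he'.2.2 hf.2.2 he'.1 hf.1).trans
      (hS.fst_eq_of_mem_of_mem hQ he hj hl h he''.2.1 hf.2.1 he''.2.2 hf.2.2 he''.1 hf.1).symm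
  have := card_erase_add_one (s := {f ∈ S.sigma Q | j ∈ f.2}) (mem_filter.mpr ⟨he, hj⟩)
  omega

theorem card_sigma_le_card_compl [Fintype ι] (hS : IsCosetLeader v S)
    (hQ : ∀ i ∈ S, IsDisjointSumPairs v i (Q i)) : #(S.sigma Q) ≤ #Sᶜ := by
  refine card_le_card_of_one_le_sum_inv_degree (f := Sigma.snd) (fun e he y hy => ?_)
    (fun e he => ?_)
  · rw [mem_sigma] at he
    exact mem_compl.mpr (hS.notMem_of_isDisjointSumPairs he.1 (hQ _ he.1) he.2 hy)
  obtain ⟨j, l, hjl, hp, -, h⟩ := (hQ _ (mem_sigma.mp he).1).2 _ (mem_sigma.mp he).2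
  have hj : j ∈ e.2 := by simp [hp]
  have hl : l ∈ e.2 := by simp [hp]
  have hdeg : ∀ y ∈ e.2, 1 ≤ #{f ∈ S.sigma Q | y ∈ f.2} :=
    fun y hy => card_pos.mpr ⟨e, mem_filter.mpr ⟨he, hy⟩⟩
  rw [hp, sum_pair hjl]
  exact one_le_inv_add_inv (hdeg j hj) (hdeg l hl) (hS.card_filter_mem_le_two hQ he hj hl h)
    (hS.card_filter_mem_le_two hQ he hl hj (h.trans (add_comm _ _)))

theorem card_mul_succ_le [Fintype ι] (hS : IsCosetLeader v S)
    (hQ : ∀ i ∈ S, IsDisjointSumPairs v i (Q i)) {K : ℕ} (hK : ∀ i ∈ S, K ≤ #(Q i)) :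
    #S * (K + 1) ≤ Fintype.card ι := by
  have hE := hS.card_sigma_le_card_compl hQ
  rw [card_sigma, card_compl] at hE
  have hsum := card_nsmul_le_sum S (fun i => #(Q i)) K hK
  have := card_le_univ S
  rw [smul_eq_mul] at hsum
  rw [mul_add_one]
  omega

end IsCosetLeader

theorem exists_sum_eq_card_mul_succ_le [Fintype ι] {K : ℕ}
    (hpairs : ∀ i, v i ≠ 0 → ∃ P : Finset (Finset ι), K ≤ #P ∧ IsDisjointSumPairs v i P)
    (T : Finset ι) :
    ∃ S : Finset ι, ∑ i ∈ S, v i = ∑ i ∈ T, v i ∧ #S * (K + 1) ≤ Fintype.card ι := by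
  choose! Q hQK hQ using hpairs
  obtain ⟨S, hS, hsum⟩ := exists_isCosetLeader v T
  exact ⟨S, hsum, hS.card_mul_succ_le (fun i hi => hQ i (hS.ne_zero hi))
    fun i hi => hQK i (hS.ne_zero hi)⟩

end SumPairs

theorem sum_range_choose_mul_pow_le (n R : ℕ) {x : ℝ} (hx : 0 ≤ x) :
    ∑ i ∈ range (R + 1), (n.choose i : ℝ) * x ^ i ≤ (1 + x) ^ n := calc
  _ ≤ ∑ i ∈ range (R + 1 + n), (n.choose i : ℝ) * x ^ i :=
      sum_le_sum_of_subset_of_nonneg (range_subset_range.mpr (by omega))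
        fun _ _ _ => by positivity
  _ = ∑ i ∈ range (n + 1), (n.choose i : ℝ) * x ^ i := by
      refine (sum_subset (range_subset_range.mpr (by omega)) fun i _ hi => ?_).symm
      rw [Nat.choose_eq_zero_of_lt (by simpa using hi), Nat.cast_zero, zero_mul]
  _ = (1 + x) ^ n := by
      rw [add_comm 1 x, add_pow]
      exact sum_congr rfl fun i _ => by rw [one_pow, mul_one, mul_comm]

theorem logb_sum_choose_le (n K : ℕ) :
    logb 2 (∑ i ∈ range (n / (K + 1) + 1), (n.choose i : ℝ)) ≤
      ((n : ℝ) * logb 2 ((K : ℝ) + 1) + (n : ℝ) / log 2) / ((K : ℝ) + 1) := by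
  set R := n / (K + 1)
  set B := ∑ i ∈ range (R + 1), (n.choose i : ℝ)
  have hK : (1 : ℝ) ≤ K + 1 := by simp
  have hB : 0 < B := by
    simp only [B, sum_range_succ', Nat.choose_zero_right, Nat.cast_one]; positivity
  set x : ℝ := ((K : ℝ) + 1)⁻¹
  have hx0 : 0 < x := by positivity
  have hx1 : x ≤ 1 := inv_le_one_of_one_le₀ hK
  have hpow : B * x ^ R ≤ (1 + x) ^ n := calc
    B * x ^ R = ∑ i ∈ range (R + 1), (n.choose i : ℝ) * x ^ R := sum_mul ..
    _ ≤ ∑ i ∈ range (R + 1), (n.choose i : ℝ) * x ^ i :=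
        sum_le_sum fun i hi => mul_le_mul_of_nonneg_left
          (pow_le_pow_of_le_one hx0.le hx1 (mem_range_succ_iff.mp hi)) (by positivity)
    _ ≤ (1 + x) ^ n := sum_range_choose_mul_pow_le n R hx0.le
  have hlog : log B ≤ n * x + R * log (K + 1) := by
    have h := log_le_log (by positivity) hpow
    rw [log_mul hB.ne' (by positivity), log_pow, log_pow, log_inv] at h
    have hx : log (1 + x) ≤ x := by linarith [log_le_sub_one_of_pos (by positivity : 0 < 1 + x)]
    nlinarith [Nat.cast_nonneg (α := ℝ) n]
  have hR : (R : ℝ) ≤ n / (K + 1) := by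
    exact_mod_cast Nat.cast_div_le (α := ℝ) (m := n) (n := K + 1)
  have hlogK : 0 ≤ log ((K : ℝ) + 1) := log_nonneg hK
  have hlog2 : 0 < log 2 := log_pos one_lt_two
  rw [logb, logb, div_le_iff₀ hlog2]
  calc log B ≤ n * x + R * log (K + 1) := hlog
    _ ≤ n * x + n / (K + 1) * log (K + 1) := by gcongr
    _ = _ := by simp only [x]; field_simp; ring

theorem main_lemma_dimension_bound_general
    (m n K : ℕ)
    (G : Fin m → Fin n → ZMod 2)
    (v : Fin n → Fin m → ZMod 2) (hv : ∀ i r, v i r = G r i)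
    (V : Submodule (ZMod 2) (Fin n → ZMod 2))
    (hV : V = Submodule.span (ZMod 2) (Set.range G))
    (hpairs : ∀ i : Fin n, v i ≠ 0 →
      ∃ P : Finset (Finset (Fin n)),
        K ≤ P.card ∧
        (P : Set (Finset (Fin n))).PairwiseDisjoint id ∧
        ∀ s ∈ P, ∃ j l : Fin n, j ≠ l ∧ s = {j, l} ∧ i ∉ s ∧ v i = v j + v l) :
    (Module.finrank (ZMod 2) V : ℝ) ≤
        Real.logb 2 (∑ i ∈ Finset.range (n / (K + 1) + 1), (n.choose i : ℝ)) ∧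
      Real.logb 2 (∑ i ∈ Finset.range (n / (K + 1) + 1), (n.choose i : ℝ)) ≤
        ((n : ℝ) * Real.logb 2 ((K : ℝ) + 1) + (n : ℝ) / Real.log 2) / ((K : ℝ) + 1) := by
  have hrank : Module.finrank (ZMod 2) V =
      Module.finrank (ZMod 2) (Submodule.span (ZMod 2) (Set.range v)) := by
    have hcol : (Matrix.of G).col = v := funext fun i => funext fun r => (hv i r).symm
    rw [hV, ← hcol, ← Matrix.rank_eq_finrank_span_cols]
    exact (Matrix.of G).rank_eq_finrank_span_row.symm
  have hcount := two_pow_finrank_span_le (R := n / (K + 1)) fun T => by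
    obtain ⟨S, hS, hcard⟩ := exists_sum_eq_card_mul_succ_le hpairs T
    exact ⟨S, hS, (Nat.le_div_iff_mul_le K.succ_pos).mpr (by simpa using hcard)⟩
  have hcount' : (2 : ℝ) ^ Module.finrank (ZMod 2) V ≤
      ∑ i ∈ range (n / (K + 1) + 1), (n.choose i : ℝ) := by
    rw [Fintype.card_fin] at hcount
    rw [hrank]
    exact_mod_cast hcount
  refine ⟨?_, logb_sum_choose_le n K⟩
  rw [le_logb_iff_rpow_le one_lt_two ((by positivity : (0 : ℝ) < _).trans_le hcount'),
    rpow_natCast]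
  exact hcount'

/-- Dimension bound: if every nonzero column of `G` has at least `K` pairwise disjoint
representations as a sum of two other columns, then
`dim V ≤ log₂(Σ_{i=0}^{⌊n/(K+1)⌋} C(n,i)) ≤ (n log₂(K+1) + n/ln 2)/(K+1)`. -/
theorem main_lemma_dimension_bound
    (m n K : ℕ) (hK : 1 ≤ K)
    (G : Fin m → Fin n → ZMod 2)
    (v : Fin n → Fin m → ZMod 2) (hv : ∀ i r, v i r = G r i)
    (V : Submodule (ZMod 2) (Fin n → ZMod 2))
    (hV : V = Submodule.span (ZMod 2) (Set.range G))
    (hpairs : ∀ i : Fin n, v i ≠ 0 →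
      ∃ P : Finset (Finset (Fin n)),
        K ≤ P.card ∧
        (P : Set (Finset (Fin n))).PairwiseDisjoint id ∧
        ∀ s ∈ P, ∃ j l : Fin n, j ≠ l ∧ s = {j, l} ∧ i ∉ s ∧ v i = v j + v l) :
    (Module.finrank (ZMod 2) V : ℝ) ≤
        Real.logb 2 (∑ i ∈ Finset.range (n / (K + 1) + 1), (n.choose i : ℝ)) ∧
      Real.logb 2 (∑ i ∈ Finset.range (n / (K + 1) + 1), (n.choose i : ℝ)) ≤
        ((n : ℝ) * Real.logb 2 ((K : ℝ) + 1) + (n : ℝ) / Real.log 2) / ((K : ℝ) + 1) :=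
  main_lemma_dimension_bound_general m n K G v hv V hV hpairs
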